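/- arXiv:2003.06450 — 2 statements merged into one kernel-verified Lean document; each statement's English description precedes it below -/
import Mathlib

section
/- Let α > 0 be real and z a real number with |z| < 1/(α+1). Then the series ∑_{n≥1} (α+1)^{n−1}·C(n−1−1/(α+1), n−1)·z^n/n converges and its sum equals 1 − (1−(α+1)z)^{1/(α+1)}. Equivalently, the total weight of (b,α)-plane oriented recursive trees of size n is T_n = (n−1)!·(α+1)^{n−1}·C(n−1−1/(α+1), n−1), i.e. T_n/n! is the n-th Taylor coefficient of 1 − (1−(α+1)z)^{1/(α+1)} at z = 0. -/
/-!
With `s = 1/(α+1)` and `y = -(α+1)z`, the series is the binomial series of `(1 + y)^s` without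
its constant term, up to sign: upper negation `C(m - s, m) = (-1)^m C(s - 1, m)` and absorption
`(m + 1) C(s, m + 1) = s C(s - 1, m)` turn the `m`-th term into `-C(s, m + 1) y^(m+1)`.
-/

/-- The generalized binomial coefficient `C(x, n) = x(x-1)⋯(x-n+1)/n!`. -/
noncomputable def genBinom (x : ℝ) (n : ℕ) : ℝ :=
    (∏ i ∈ Finset.range n, (x - i)) / (n.factorial : ℝ)

theorem genBinom_eq_choose (x : ℝ) (n : ℕ) : genBinom x n = Ring.choose x n := by
  rw [Ring.choose_eq_smul, ← Polynomial.aeval_eq_smeval, ← Polynomial.eval_map_algebraMap,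
    descPochhammer_map, descPochhammer_eval_eq_prod_range, genBinom, smul_eq_mul,
    inv_mul_eq_div]

theorem Real.hasSum_choose_mul_pow (a : ℝ) {y : ℝ} (hy : |y| < 1) :
    HasSum (fun n => Ring.choose a n * y ^ n) ((1 + y) ^ a) := by
  have := Real.one_add_rpow_hasFPowerSeriesOnBall_zero (a := a) |>.hasSum (y := y)
    (by simpa [← ofReal_norm, ← Real.norm_eq_abs] using hy)
  simpa [binomialSeries, FormalMultilinearSeries.coeff_ofScalars, mul_comm] using this

namespace Ring

variable {R : Type*} [Ring R] [BinomialRing R]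

theorem choose_natCast_sub_self (s : R) (m : ℕ) :
    choose ((m : R) - s) m = (-1) ^ m * choose (s - 1) m := by
  have h := choose_neg (s - m) m
  rw [neg_sub, sub_add_cancel] at h
  rw [h, Units.smul_def, ← Int.cast_negOnePow_natCast, zsmul_eq_mul]

theorem succ_mul_choose_succ (s : R) (m : ℕ) :
    ((m : R) + 1) * choose s (m + 1) = s * choose (s - 1) m := by
  simpa [choose_one_right, Nat.choose_one_right, nsmul_eq_mul] using
    choose_smul_choose s (Nat.le_add_left 1 m)

end Ring

theorem pow_mul_choose_natCast_sub_one_div {a : ℝ} (ha : a ≠ 0) (z : ℝ) (m : ℕ) :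
    a ^ m * Ring.choose ((m : ℝ) - 1 / a) m * z ^ (m + 1) / ((m : ℝ) + 1) =
      -(Ring.choose (1 / a) (m + 1) * (-(a * z)) ^ (m + 1)) := by
  have hsa : 1 / a * a = 1 := one_div_mul_cancel ha
  generalize 1 / a = s at hsa ⊢
  have hm : (m : ℝ) + 1 ≠ 0 := by positivity
  have habsorb := Ring.succ_mul_choose_succ s m
  rw [Ring.choose_natCast_sub_self, div_eq_iff hm]
  linear_combination -(-1) ^ m * a ^ m * z ^ (m + 1) *
    (a * habsorb + Ring.choose (s - 1) m * hsa)

theorem bport_total_weights_general (α : ℝ) (z : ℝ) (hz : |z| < 1 / (α + 1)) :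
    HasSum
      (fun m : ℕ => (α + 1) ^ m * genBinom ((m : ℝ) - 1 / (α + 1)) m
        * z ^ (m + 1) / ((m : ℝ) + 1))
      (1 - (1 - (α + 1) * z) ^ (1 / (α + 1))) := by
  have ha : 0 < α + 1 := one_div_pos.mp ((abs_nonneg z).trans_lt hz)
  have hy : |-((α + 1) * z)| < 1 := by
    rwa [abs_neg, abs_mul, abs_of_pos ha, ← lt_div_iff₀' ha]
  have hbinom := Real.hasSum_choose_mul_pow (1 / (α + 1)) hy
  rw [← hasSum_nat_add_iff' 1, Finset.sum_range_one, Ring.choose_zero_right, pow_zero, mul_one,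
    ← sub_eq_add_neg] at hbinom
  simp_rw [genBinom_eq_choose, pow_mul_choose_natCast_sub_one_div ha.ne']
  simpa only [neg_sub] using hbinom.neg

/-- For real `α > 0` and real `z` with `|z| < 1/(α+1)`, the series
`∑_{n ≥ 1} (α+1)^{n-1} · C(n-1-1/(α+1), n-1) · z^n / n` converges with sum
`1 - (1-(α+1)z)^{1/(α+1)}`; i.e. the total weight of `(b,α)`-plane oriented recursive trees of
size `n` is `T_n = (n-1)!·(α+1)^{n-1}·C(n-1-1/(α+1), n-1)`.  (Here the sum is indexed by
`n = m+1`, `m ∈ ℕ`.) -/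
theorem bport_total_weights (α : ℝ) (hα : 0 < α) (z : ℝ) (hz : |z| < 1 / (α + 1)) :
    HasSum
      (fun m : ℕ => (α + 1) ^ m * genBinom ((m : ℝ) - 1 / (α + 1)) m
        * z ^ (m + 1) / ((m : ℝ) + 1))
      (1 - (1 - (α + 1) * z) ^ (1 / (α + 1))) :=
  bport_total_weights_general α z hz
end

section
/- Let b ≥ 1 be an integer, κ > −1 a real number, and let λ_1,…,λ_b be pairwise distinct complex numbers each satisfying the indicial equation λ_j(λ_j+1)⋯(λ_j+b−1) = (1+κ)(2+κ)⋯(b+κ) and ∑_{k=0}^{b−1} 1/(λ_j+k) ≠ 0. Let s_0,…,s_{b−1} be arbitrary complex numbers and define β_j = ∑_{r=0}^{b−1} s_r · C(λ_j+b−1, b−r−1) / [C(b,r)·(b−r)·C(b+κ, b)·∑_{k=0}^{b−1} 1/(λ_j+k)] for 1 ≤ j ≤ b. Then the β_j solve the system of linear equations ∑_{j=1}^{b} C(λ_j+ℓ−1, ℓ)·β_j = s_ℓ for every 0 ≤ ℓ ≤ b−1. -/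
/-- The generalized binomial coefficient `C(x, n) = x(x-1)⋯(x-n+1)/n!` over `ℂ`. -/
noncomputable def genBinomC (x : ℂ) (n : ℕ) : ℂ :=
    (∏ i ∈ Finset.range n, (x - i)) / (n.factorial : ℂ)

/-!
Write `P(x) = x(x+1)⋯(x+b-1)` and `P₀ = P(1+κ) ≠ 0`. The indicial equation makes
`λ_1, …, λ_b` the `b` distinct roots of `P - P₀`, so `∏_{i≠j} (λ_j - λ_i) = P'(λ_j)
= P₀ ∑_k 1/(λ_j+k)`. Once the binomial coefficients are written out, the coefficient of `s_r`
in the `ℓ`-th equation is `r!/ℓ!` times the Lagrange sum `∑_j Q(λ_j) / ∏_{i≠j} (λ_j - λ_i)`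
with `Q(x) = x⋯(x+ℓ-1) · (x+r+1)⋯(x+b-1)`, i.e. the coefficient of `x^(b-1)` of the
interpolant of `Q`. For `ℓ ≤ r`, `Q` is monic of degree `ℓ + b - r - 1 ≤ b - 1`, with equality
iff `ℓ = r`; for `ℓ > r`, `Q` agrees on the roots with `P₀ (x+r+1)⋯(x+ℓ-1)`, of degree
`< b - 1`.
-/

open Polynomial Finset
open scoped Nat

namespace Lagrange

variable {F ι : Type*} [Field F] {s : Finset ι} {v : ι → F}

theorem nodal_eq_sub_C_of_eval_eq (hvs : Set.InjOn v s) (hs : s.Nonempty) {f : F[X]}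
    (hf : f.Monic) (hdeg : f.natDegree = #s) {c : F} (hc : ∀ i ∈ s, f.eval (v i) = c) :
    nodal s v = f - C c := by
  have hfc : (f - C c).Monic :=
    hf.sub_of_left (degree_C_lt.trans_le (by
      rw [degree_eq_natDegree hf.ne_zero, hdeg]; exact_mod_cast hs.card_pos))
  refine eq_of_degree_le_of_eval_index_eq s hvs degree_nodal.le ?_ ?_ fun i hi => ?_
  · rw [degree_nodal, degree_eq_natDegree hfc.ne_zero, natDegree_sub_C, hdeg]
  · rw [nodal_monic.leadingCoeff, hfc.leadingCoeff]
  · rw [eval_nodal_at_node hi, eval_sub, eval_C, hc i hi, sub_self]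

variable [DecidableEq ι]

theorem eval_derivative_nodal_eq_mul_sum_inv {x : F} (hx : ∀ i ∈ s, x ≠ v i) :
    (derivative (nodal s v)).eval x = (nodal s v).eval x * ∑ i ∈ s, (x - v i)⁻¹ := by
  rw [derivative_nodal, eval_finsetSum, eval_nodal, mul_sum]
  refine sum_congr rfl fun i hi => ?_
  rw [eval_nodal, ← mul_prod_erase _ _ hi, mul_comm (x - v i), mul_assoc,
    mul_inv_cancel₀ (sub_ne_zero.2 (hx i hi)), mul_one]

theorem sum_eval_div_prod_erase_sub_of_monic (hvs : Set.InjOn v s) {g : F[X]} (hg : g.Monic)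
    (hdeg : g.natDegree < #s) :
    ∑ i ∈ s, g.eval (v i) / ∏ j ∈ s.erase i, (v i - v j) =
      if g.natDegree = #s - 1 then 1 else 0 := by
  rw [← coeff_eq_sum hvs (degree_le_natDegree.trans_lt (by exact_mod_cast hdeg))]
  split_ifs with h
  · rw [← h, hg.coeff_natDegree]
  · exact coeff_eq_zero_of_natDegree_lt (by omega)

end Lagrange

open Lagrange

variable {F : Type*} [Field F]

theorem eval_nodal_neg_natCast (T : Finset ℕ) (x : F) :
    (nodal T fun k => -(k : F)).eval x = ∏ k ∈ T, (x + k) := by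
  simp only [eval_nodal, sub_neg_eq_add]

theorem sum_prod_add_div_prod_erase_sub (T : Finset ℕ) {b : ℕ} {lam : Fin b → F}
    (hinj : Function.Injective lam) (hT : #T < b) :
    ∑ j, (∏ k ∈ T, (lam j + k)) / ∏ i ∈ univ.erase j, (lam j - lam i) =
      if #T = b - 1 then 1 else 0 := by
  have h := sum_eval_div_prod_erase_sub_of_monic hinj.injOn nodal_monic
    (g := nodal T fun k => -(k : F)) (by rwa [natDegree_nodal, card_univ, Fintype.card_fin])
  simpa only [eval_nodal_neg_natCast, natDegree_nodal, card_univ, Fintype.card_fin] using h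

section IndicialRoots

variable {b : ℕ} {lam : Fin b → F} {P₀ : F}

theorem prod_erase_sub_eq_mul_sum_inv (hb : 1 ≤ b) (hinj : Function.Injective lam)
    (hind : ∀ j, ∏ k ∈ range b, (lam j + k) = P₀) (hP₀ : P₀ ≠ 0) (j : Fin b) :
    ∏ i ∈ univ.erase j, (lam j - lam i) = P₀ * ∑ k ∈ range b, (lam j + k)⁻¹ := by
  have hnodal : nodal univ lam = (nodal (range b) fun k => -(k : F)) - C P₀ :=
    nodal_eq_sub_C_of_eval_eq hinj.injOn (univ_nonempty_iff.2 ⟨⟨0, hb⟩⟩) nodal_monic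
      (by rw [natDegree_nodal, card_range, card_univ, Fintype.card_fin])
      fun i _ => by rw [eval_nodal_neg_natCast, hind i]
  have hne : ∀ k ∈ range b, lam j ≠ -(k : F) := fun k hk h =>
    hP₀ (hind j ▸ prod_eq_zero hk (by rw [h, neg_add_cancel]))
  rw [← eval_nodal, ← eval_nodal_derivative_eval_node_eq (mem_univ j), hnodal, derivative_sub,
    derivative_C, sub_zero, eval_derivative_nodal_eq_mul_sum_inv hne, eval_nodal_neg_natCast,
    hind j]
  simp only [sub_neg_eq_add]

theorem sum_prod_mul_prod_div_prod_erase_sub (hinj : Function.Injective lam)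
    (hind : ∀ j, ∏ k ∈ range b, (lam j + k) = P₀) {ℓ r : ℕ} (hℓ : ℓ < b) (hr : r < b) :
    ∑ j, (∏ k ∈ range ℓ, (lam j + k)) * (∏ k ∈ Ico (r + 1) b, (lam j + k)) /
        ∏ i ∈ univ.erase j, (lam j - lam i) = if ℓ = r then 1 else 0 := by
  rcases le_or_gt ℓ r with hle | hlt
  · have hdisj : Disjoint (range ℓ) (Ico (r + 1) b) :=
      disjoint_left.2 fun k hk hk' => by simp only [mem_range, mem_Ico] at hk hk'; omega
    have hcard : #(range ℓ ∪ Ico (r + 1) b) = ℓ + (b - (r + 1)) := by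
      rw [card_union_of_disjoint hdisj, card_range, Nat.card_Ico]
    simp_rw [← prod_union hdisj]
    rw [sum_prod_add_div_prod_erase_sub _ hinj (by omega), hcard]
    exact if_congr (by omega) rfl rfl
  · have hsplit : ∀ j, (∏ k ∈ range ℓ, (lam j + k)) * (∏ k ∈ Ico (r + 1) b, (lam j + k)) =
        P₀ * ∏ k ∈ Ico (r + 1) ℓ, (lam j + k) := fun j => by
      rw [← hind j, ← prod_range_mul_prod_Ico _ (by omega : r + 1 ≤ ℓ),
        ← prod_range_mul_prod_Ico _ (by omega : r + 1 ≤ b)]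
      ring
    simp_rw [hsplit, mul_div_assoc, ← mul_sum]
    rw [sum_prod_add_div_prod_erase_sub _ hinj (by rw [Nat.card_Ico]; omega), Nat.card_Ico,
      if_neg (by omega), if_neg (by omega), mul_zero]

end IndicialRoots

theorem genBinomC_add_natCast_sub_one (x : ℂ) (n : ℕ) :
    genBinomC (x + n - 1) n = (∏ k ∈ range n, (x + k)) / n ! := by
  rw [genBinomC, ← prod_range_reflect (fun k => x + (k : ℂ)) n]
  congr 1
  refine prod_congr rfl fun i hi => ?_
  have hi := mem_range.1 hi
  rw [Nat.cast_sub (by omega), Nat.cast_sub (by omega)]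
  push_cast
  ring

theorem genBinomC_add_natCast_sub_one_sub {b r : ℕ} (hr : r < b) (x : ℂ) :
    genBinomC (x + b - 1) (b - r - 1) = (∏ k ∈ Ico (r + 1) b, (x + k)) / (b - r - 1)! := by
  have hx : x + b - 1 = x + (r + 1 : ℕ) + (b - r - 1 : ℕ) - 1 := by
    rw [Nat.cast_sub (by omega), Nat.cast_sub (by omega)]
    push_cast
    ring
  rw [hx, genBinomC_add_natCast_sub_one, prod_Ico_eq_prod_range,
    show b - (r + 1) = b - r - 1 by omega]
  simp only [Nat.cast_add, add_assoc]

theorem genBinomC_natCast (n k : ℕ) : genBinomC n k = n.choose k := by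
  rw [genBinomC, ← descPochhammer_eval_eq_prod_range, descPochhammer_eval_eq_descFactorial,
    Nat.descFactorial_eq_factorial_mul_choose, Nat.cast_mul,
    mul_div_cancel_left₀ _ (by exact_mod_cast (Nat.factorial_ne_zero k))]

theorem cast_choose_mul_sub_eq {b r : ℕ} (hr : r < b) :
    (b.choose r : ℂ) * (b - r) = b ! / (r ! * (b - r - 1)!) := by
  rw [← Nat.cast_sub hr.le, eq_div_iff (by norm_cast; positivity),
    ← Nat.choose_mul_factorial_mul_factorial hr.le, ← Nat.mul_factorial_pred (by omega : b - r ≠ 0)]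
  push_cast
  ring

theorem genBinomC_mul_genBinomC_div_eq {b r : ℕ} (hr : r < b) (ℓ : ℕ) (x κ S : ℂ) :
    genBinomC (x + ℓ - 1) ℓ * (genBinomC (x + b - 1) (b - r - 1) /
        (genBinomC b r * (b - r) * genBinomC (b + κ) b * S)) =
      r ! / ℓ ! * ((∏ k ∈ range ℓ, (x + k)) * (∏ k ∈ Ico (r + 1) b, (x + k)) /
        ((∏ k ∈ range b, (1 + κ + k)) * S)) := by
  rw [show (b : ℂ) + κ = 1 + κ + b - 1 by ring, genBinomC_add_natCast_sub_one,
    genBinomC_add_natCast_sub_one, genBinomC_add_natCast_sub_one_sub hr, genBinomC_natCast,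
    cast_choose_mul_sub_eq hr]
  have hm : ((b - r - 1)! * b ! : ℂ) ≠ 0 := by norm_cast; positivity
  field_simp
  -- `P₀ * S` may vanish, so the common factor is cancelled by hand
  conv_rhs => rw [← mul_div_mul_right _ _ hm]
  ring

theorem linear_system_solution_general (b : ℕ) (hb : 1 ≤ b) (κ : ℝ) (hκ : -1 < κ)
    (lam : Fin b → ℂ) (hinj : Function.Injective lam)
    (hind : ∀ j : Fin b,
      ∏ k ∈ Finset.range b, (lam j + (k : ℂ)) = ∏ k ∈ Finset.range b, (1 + (κ : ℂ) + (k : ℂ)))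
    (s : ℕ → ℂ) (β : Fin b → ℂ)
    (hβ : ∀ j : Fin b, β j = ∑ r ∈ Finset.range b,
      s r * genBinomC (lam j + (b : ℂ) - 1) (b - r - 1)
        / (genBinomC (b : ℂ) r * ((b : ℂ) - (r : ℂ)) * genBinomC ((b : ℂ) + (κ : ℂ)) b
            * ∑ k ∈ Finset.range b, (lam j + (k : ℂ))⁻¹)) :
    ∀ ℓ : ℕ, ℓ ≤ b - 1 →
      ∑ j : Fin b, genBinomC (lam j + (ℓ : ℂ) - 1) ℓ * β j = s ℓ := by
  intro ℓ hℓ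
  have hP₀ : ∏ k ∈ range b, (1 + (κ : ℂ) + k) ≠ 0 := prod_ne_zero_iff.2 fun k _ => by
    have hk : (0 : ℝ) ≤ k := k.cast_nonneg
    exact_mod_cast (by linarith : (0 : ℝ) < 1 + κ + k).ne'
  calc ∑ j, genBinomC (lam j + ℓ - 1) ℓ * β j
      = ∑ r ∈ range b, s r * (r ! / ℓ !) * ∑ j, (∏ k ∈ range ℓ, (lam j + k)) *
          (∏ k ∈ Ico (r + 1) b, (lam j + k)) / ∏ i ∈ univ.erase j, (lam j - lam i) := by
        rw [sum_congr rfl fun j _ => by rw [hβ j, mul_sum], sum_comm]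
        refine sum_congr rfl fun r hr => ?_
        rw [mul_sum]
        refine sum_congr rfl fun j _ => ?_
        rw [mul_div_assoc, mul_left_comm, genBinomC_mul_genBinomC_div_eq (mem_range.1 hr),
          prod_erase_sub_eq_mul_sum_inv hb hinj hind hP₀ j]
        ring
    _ = ∑ r ∈ range b, s r * (r ! / ℓ !) * if ℓ = r then 1 else 0 :=
        sum_congr rfl fun r hr => by
          rw [sum_prod_mul_prod_div_prod_erase_sub hinj hind (by omega) (mem_range.1 hr)]
    _ = s ℓ := by
        simp [mem_range.2 (by omega : ℓ < b), Nat.factorial_ne_zero]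

/-- Let `b ≥ 1`, `κ > -1`, and let `λ_1, …, λ_b` be pairwise distinct complex numbers satisfying the
indicial equation `λ_j(λ_j+1)⋯(λ_j+b-1) = (1+κ)(2+κ)⋯(b+κ)` with `∑_{k=0}^{b-1} 1/(λ_j+k) ≠ 0`.
For arbitrary `s_0, …, s_{b-1} ∈ ℂ` set
`β_j = ∑_{r=0}^{b-1} s_r · C(λ_j+b-1, b-r-1) / (C(b,r)·(b-r)·C(b+κ,b)·∑_{k=0}^{b-1} 1/(λ_j+k))`.
Then `∑_{j=1}^{b} C(λ_j+ℓ-1, ℓ)·β_j = s_ℓ` for all `0 ≤ ℓ ≤ b-1`. -/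
theorem linear_system_solution (b : ℕ) (hb : 1 ≤ b) (κ : ℝ) (hκ : -1 < κ)
    (lam : Fin b → ℂ) (hinj : Function.Injective lam)
    (hind : ∀ j : Fin b,
      ∏ k ∈ Finset.range b, (lam j + (k : ℂ)) = ∏ k ∈ Finset.range b, (1 + (κ : ℂ) + (k : ℂ)))
    (hsum : ∀ j : Fin b, ∑ k ∈ Finset.range b, (lam j + (k : ℂ))⁻¹ ≠ 0)
    (s : ℕ → ℂ) (β : Fin b → ℂ)
    (hβ : ∀ j : Fin b, β j = ∑ r ∈ Finset.range b,
      s r * genBinomC (lam j + (b : ℂ) - 1) (b - r - 1)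
        / (genBinomC (b : ℂ) r * ((b : ℂ) - (r : ℂ)) * genBinomC ((b : ℂ) + (κ : ℂ)) b
            * ∑ k ∈ Finset.range b, (lam j + (k : ℂ))⁻¹)) :
    ∀ ℓ : ℕ, ℓ ≤ b - 1 →
      ∑ j : Fin b, genBinomC (lam j + (ℓ : ℂ) - 1) ℓ * β j = s ℓ :=
  linear_system_solution_general b hb κ hκ lam hinj hind s β hβ
end
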